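/- If the lattice points of ℤ² lying in the annulus R - 1/√2 < ‖z‖ < R + 1/√2 are denoted λ₁, ..., λ_K, ordered by nondecreasing polar angle (indices cyclic mod K), then there is an absolute constant bounding ‖λ_{j+1} - λ_j‖ for all 1 ≤ j ≤ K and all R > 0. -/

import Mathlib

open Real

/-- A lattice point viewed as a complex number. -/
noncomputable def latC (p : ℤ × ℤ) : ℂ := (p.1 : ℝ) + (p.2 : ℝ) * Complex.I

/-- Lattice points in the width-`√2` annulus around radius `R`. -/
noncomputable def annulusPts (R : ℝ) : Set (ℤ × ℤ) :=
  {p | R - 1/Real.sqrt 2 < ‖latC p‖ ∧ ‖latC p‖ < R + 1/Real.sqrt 2}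

lemma abs_sq_eq (w : ℂ) : (‖w‖)^2 = w.re^2 + w.im^2 := by
  rw [Complex.sq_norm, Complex.normSq_apply]; ring

lemma sqrt2_facts : (1.4 : ℝ) ≤ Real.sqrt 2 ∧ Real.sqrt 2 ≤ 1.5 := by
  have h := Real.sq_sqrt (by norm_num : (2:ℝ) ≥ 0)
  have h0 := Real.sqrt_nonneg 2
  constructor <;> nlinarith

/-- membership from squared bounds, assuming the squared lower bound plus positivity -/
lemma mem_annulus_of_sq (R : ℝ) (hR : 0 < R) (p : ℤ × ℤ)
    (h1 : R^2 - Real.sqrt 2 * R + 1/2 < ((p.1:ℝ))^2 + ((p.2:ℝ))^2)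
    (h2 : ((p.1:ℝ))^2 + ((p.2:ℝ))^2 < R^2 + Real.sqrt 2 * R + 1/2) :
    p ∈ annulusPts R := by
  obtain ⟨hs1, hs2⟩ := sqrt2_facts
  have hs := Real.sq_sqrt (by norm_num : (2:ℝ) ≥ 0)
  have hinv : 1 / Real.sqrt 2 * Real.sqrt 2 = 1 := by
    field_simp
  have habs : (‖latC p‖)^2 = ((p.1:ℝ))^2 + ((p.2:ℝ))^2 := by
    rw [abs_sq_eq]; simp [latC]
  have hnn := norm_nonneg (latC p)
  have hlow : (R - 1/Real.sqrt 2)^2 = R^2 - Real.sqrt 2 * R + 1/2 := by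
    have : (1/Real.sqrt 2)^2 = 1/2 := by
      rw [div_pow, one_pow, hs]
    nlinarith
  have hhigh : (R + 1/Real.sqrt 2)^2 = R^2 + Real.sqrt 2 * R + 1/2 := by
    have : (1/Real.sqrt 2)^2 = 1/2 := by
      rw [div_pow, one_pow, hs]
    nlinarith
  constructor
  · rcases le_or_gt (R - 1/Real.sqrt 2) 0 with h | h
    · rcases lt_or_eq_of_le h with h' | h'
      · exact lt_of_lt_of_le h' hnn
      · have h0 : (0:ℝ) < ((p.1:ℝ))^2 + ((p.2:ℝ))^2 := by nlinarith
        have : 0 < ‖latC p‖ := by nlinarith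
        linarith
    · apply lt_of_pow_lt_pow_left₀ 2 hnn
      rw [habs, hlow]; exact h1
  · apply lt_of_pow_lt_pow_left₀ 2 (by positivity)
    rw [habs, hhigh]; exact h2

set_option maxHeartbeats 1000000 in
lemma exists_near (R : ℝ) (hR : 0 < R) (θ : ℝ) :
    ∃ p ∈ annulusPts R, ‖latC p - R * Complex.exp (θ * Complex.I)‖ ≤ 1 := by
  obtain ⟨hs1, hs2⟩ := sqrt2_facts
  have hs := Real.sq_sqrt (by norm_num : (2:ℝ) ≥ 0)
  set z : ℂ := (R : ℂ) * Complex.exp (θ * Complex.I) with hz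
  have hzabs : ‖z‖ = R := by
    rw [hz, norm_mul, Complex.norm_exp_ofReal_mul_I, Complex.norm_real, Real.norm_eq_abs, abs_of_pos hR, mul_one]
  obtain ⟨x, hx⟩ : ∃ x : ℝ, x = z.re := ⟨_, rfl⟩
  obtain ⟨y, hy⟩ : ∃ y : ℝ, y = z.im := ⟨_, rfl⟩
  have hxy : x^2 + y^2 = R^2 := by
    have := abs_sq_eq z
    rw [hzabs] at this; rw [hx, hy]; linarith
  obtain ⟨a, ha⟩ : ∃ a : ℤ, a = round x := ⟨_, rfl⟩
  obtain ⟨b, hb⟩ : ∃ b : ℤ, b = round y := ⟨_, rfl⟩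
  have hxa : |x - (a:ℝ)| ≤ 1/2 := by rw [ha]; exact abs_sub_round x
  have hyb : |y - (b:ℝ)| ≤ 1/2 := by rw [hb]; exact abs_sub_round y
  have hxa2 : (x - (a:ℝ))^2 ≤ 1/4 := by rcases abs_le.1 hxa with ⟨u1,u2⟩; nlinarith
  have hyb2 : (y - (b:ℝ))^2 ≤ 1/4 := by rcases abs_le.1 hyb with ⟨u1,u2⟩; nlinarith
  -- distance formula helper
  have hdist : ∀ p : ℤ × ℤ, (‖latC p - z‖)^2 = ((p.1:ℝ) - x)^2 + ((p.2:ℝ) - y)^2 := by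
    intro p
    rw [abs_sq_eq, hx, hy]
    simp [latC]
  rcases lt_or_eq_of_le (by linarith : (x - (a:ℝ))^2 + (y - (b:ℝ))^2 ≤ 1/2) with hlt | heq
  · -- rounding point works, triangle inequality
    refine ⟨(a, b), ?_, ?_⟩
    · have hd2 := hdist (a, b)
      have hd : ‖latC (a,b) - z‖ < 1/Real.sqrt 2 := by
        have h12 : (1/Real.sqrt 2)^2 = 1/2 := by rw [div_pow, one_pow, hs]
        apply lt_of_pow_lt_pow_left₀ 2 (by positivity)
        rw [hd2, h12]
        nlinarith [hlt]
      have t1 : ‖latC (a,b)‖ ≤ ‖z‖ + ‖latC (a,b) - z‖ := by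
        have := norm_add_le z (latC (a,b) - z)
        simpa using this
      have t2 : ‖z‖ ≤ ‖latC (a,b)‖ + ‖latC (a,b) - z‖ := by
        have := norm_add_le (latC (a,b)) (z - latC (a,b))
        rw [norm_sub_rev z (latC (a,b))] at this
        simpa using this
      rw [hzabs] at t1 t2
      exact ⟨by linarith, by linarith⟩
    · have hd2 := hdist (a, b)
      have := norm_nonneg (latC (a,b) - z)
      nlinarith
  · -- corner case: both fractional parts are exactly 1/2
    have hxa4 : (x - (a:ℝ))^2 = 1/4 := by linarith
    have hyb4 : (y - (b:ℝ))^2 = 1/4 := by linarith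
    have hxcases : x - (a:ℝ) = 1/2 ∨ x - (a:ℝ) = -(1/2) := by
      have : (x - (a:ℝ) - 1/2) * (x - (a:ℝ) + 1/2) = 0 := by linear_combination hxa4
      rcases mul_eq_zero.1 this with h | h
      · left; linarith
      · right; linarith
    have hycases : y - (b:ℝ) = 1/2 ∨ y - (b:ℝ) = -(1/2) := by
      have : (y - (b:ℝ) - 1/2) * (y - (b:ℝ) + 1/2) = 0 := by linear_combination hyb4
      rcases mul_eq_zero.1 this with h | h
      · left; linarith
      · right; linarith
    obtain ⟨c, hc⟩ : ∃ c : ℤ, (c:ℝ) = x + 1/2 := by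
      rcases hxcases with h | h
      · exact ⟨a + 1, by push_cast; linarith⟩
      · exact ⟨a, by push_cast; linarith⟩
    obtain ⟨d, hd⟩ : ∃ d : ℤ, (d:ℝ) = y + 1/2 := by
      rcases hycases with h | h
      · exact ⟨b + 1, by push_cast; linarith⟩
      · exact ⟨b, by push_cast; linarith⟩
    obtain ⟨e, he⟩ : ∃ e : ℤ, (e:ℝ) = y - 1/2 := by
      rcases hycases with h | h
      · exact ⟨b, by push_cast; linarith⟩
      · exact ⟨b - 1, by push_cast; linarith⟩
    have hmin : (x+y)^2 ≤ R^2 ∨ (x-y)^2 ≤ R^2 := by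
      rcases le_total ((x+y)^2) ((x-y)^2) with h | h
      · left; nlinarith
      · right; nlinarith
    rcases hmin with hm | hm
    · have hu : x + y ≤ R := by nlinarith [hm, hR]
      have hl : -R ≤ x + y := by nlinarith [hm, hR]
      refine ⟨(c, d), mem_annulus_of_sq R hR _ ?_ ?_, ?_⟩
      · show R^2 - Real.sqrt 2 * R + 1/2 < ((c:ℝ))^2 + ((d:ℝ))^2
        rw [hc, hd]; nlinarith [hxy, hR, hs1, hl]
      · show ((c:ℝ))^2 + ((d:ℝ))^2 < R^2 + Real.sqrt 2 * R + 1/2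
        rw [hc, hd]; nlinarith [hxy, hR, hs1, hu]
      · have hd2 := hdist (c, d)
        have hn := norm_nonneg (latC (c,d) - z)
        rw [hc, hd] at hd2
        nlinarith [hd2, hn]
    · have hu : x - y ≤ R := by nlinarith [hm, hR]
      have hl : -R ≤ x - y := by nlinarith [hm, hR]
      refine ⟨(c, e), mem_annulus_of_sq R hR _ ?_ ?_, ?_⟩
      · show R^2 - Real.sqrt 2 * R + 1/2 < ((c:ℝ))^2 + ((e:ℝ))^2
        rw [hc, he]; nlinarith [hxy, hR, hs1, hl]
      · show ((c:ℝ))^2 + ((e:ℝ))^2 < R^2 + Real.sqrt 2 * R + 1/2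
        rw [hc, he]; nlinarith [hxy, hR, hs1, hu]
      · have hd2 := hdist (c, e)
        have hn := norm_nonneg (latC (c,e) - z)
        rw [hc, he] at hd2
        nlinarith [hd2, hn]

lemma exp_I_sub_one (x : ℝ) : ‖Complex.exp (x * Complex.I) - 1‖ ≤ |x| := by
  have h2 : (‖Complex.exp (x * Complex.I) - 1‖)^2 = 2 - 2 * Real.cos x := by
    rw [Complex.exp_mul_I, abs_sq_eq]
    simp [Complex.add_re, Complex.add_im, Complex.sub_re, Complex.sub_im, Complex.mul_re, Complex.mul_im, Complex.I_re, Complex.I_im, Complex.one_re, Complex.one_im, Complex.cos_ofReal_re, Complex.sin_ofReal_re, Complex.cos_ofReal_im, Complex.sin_ofReal_im]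
    push_cast
    nlinarith [Real.sin_sq_add_cos_sq x]
  have hs : Real.sin (x/2)^2 ≤ (x/2)^2 := by
    have := Real.abs_sin_le_abs (x := x/2)
    nlinarith [abs_nonneg (x/2), abs_nonneg (Real.sin (x/2)), sq_abs (x/2), sq_abs (Real.sin (x/2))]
  have hc : Real.cos x = 1 - 2 * Real.sin (x/2)^2 := by
    have h := Real.cos_two_mul (x/2)
    have h' : 2 * (x/2) = x := by ring
    rw [h'] at h
    nlinarith [Real.sin_sq_add_cos_sq (x/2)]
  have hn := norm_nonneg (Complex.exp (x * Complex.I) - 1)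
  nlinarith [abs_nonneg x, sq_abs x]

lemma one_div_sqrt2 : (1:ℝ)/Real.sqrt 2 ≤ 1 ∧ 0 < (1:ℝ)/Real.sqrt 2 := by
  obtain ⟨h1, h2⟩ := sqrt2_facts
  constructor
  · rw [div_le_one (by linarith)]; linarith
  · positivity

lemma abs_annulus {R : ℝ} {p : ℤ × ℤ} (hp : p ∈ annulusPts R) :
    R - 1 < ‖latC p‖ ∧ ‖latC p‖ < R + 1 := by
  obtain ⟨h1, h2⟩ := hp
  obtain ⟨hs1, hs2⟩ := one_div_sqrt2
  exact ⟨by linarith, by linarith⟩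

lemma arg_approx (R : ℝ) (hR : 8 ≤ R) (θ : ℝ) (p : ℤ × ℤ) (hp : p ∈ annulusPts R)
    (hd : ‖latC p - (R : ℂ) * Complex.exp ((θ:ℂ) * Complex.I)‖ ≤ 1) :
    ∃ k : ℤ, |Complex.arg (latC p) - θ - 2*π*k| < 3.5/R := by
  have hR0 : (0:ℝ) < R := by linarith
  have hR8 : 1/R ≤ 1/8 := by
    rw [div_le_div_iff₀ hR0 (by norm_num)]; linarith
  set z : ℂ := (R : ℂ) * Complex.exp ((θ:ℂ) * Complex.I) with hzdef
  have hzabs : ‖z‖ = R := by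
    rw [hzdef, norm_mul, Complex.norm_exp_ofReal_mul_I, Complex.norm_real, Real.norm_eq_abs, abs_of_pos hR0, mul_one]
  have hz0 : z ≠ 0 := by
    intro h; rw [h] at hzabs; simp at hzabs; linarith
  set q : ℂ := latC p with hqdef
  have hqabs := abs_annulus hp
  rw [← hqdef] at hqabs
  have hq0 : q ≠ 0 := by
    intro h; rw [h] at hqabs; simp at hqabs; linarith [hqabs.1]
  set w : ℂ := q / z with hwdef
  have hw0 : w ≠ 0 := div_ne_zero hq0 hz0
  have hw1 : ‖w - 1‖ ≤ 1/R := by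
    have e : w - 1 = (q - z) / z := by
      rw [hwdef]; field_simp
    rw [e, norm_div, hzabs]
    gcongr
  have hre : 1 - 1/R ≤ w.re := by
    have h1 : |(w - 1).re| ≤ ‖w - 1‖ := Complex.abs_re_le_norm _
    have h2 : (w - 1).re = w.re - 1 := by simp
    rw [h2] at h1
    have := abs_le.1 (h1.trans hw1)
    linarith [this.1]
  have him : |w.im| ≤ 1/R := by
    have h1 : |(w - 1).im| ≤ ‖w - 1‖ := Complex.abs_im_le_norm _
    have h2 : (w - 1).im = w.im := by simp
    rw [h2] at h1
    linarith
  have hre0 : (0:ℝ) ≤ w.re := by linarith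
  set s := Complex.arg w with hsdef
  have hs2 : |s| ≤ π/2 := Complex.abs_arg_le_pi_div_two_iff.mpr hre0
  have hwabs : (1:ℝ)/2 ≤ ‖w‖ := le_trans (by linarith) (Complex.re_le_norm w)
  have hsinb : |Real.sin s| ≤ 2/R := by
    rw [hsdef, Complex.sin_arg, abs_div, abs_of_nonneg (norm_nonneg w)]
    rw [div_le_div_iff₀ (by linarith) hR0]
    have : |w.im| * 2 ≤ (1/R) * 2 := by linarith
    calc |w.im| * R ≤ (1/R) * R := by gcongr
    _ = 1 := by field_simp
    _ ≤ 2 * ‖w‖ := by linarith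
  have hsb : |s| ≤ π * (1/R) := by
    have h1 := Real.mul_abs_le_abs_sin hs2
    have h2 := mul_le_mul_of_nonneg_left (h1.trans hsinb) (by positivity : (0:ℝ) ≤ π/2)
    have h3 : π/2 * (2/π * |s|) = |s| := by
      field_simp
    rw [h3] at h2
    calc |s| ≤ π/2 * (2/R) := h2
    _ = π * (1/R) := by ring
  have hqe : q = z * w := by
    rw [hwdef]; field_simp
  have hang : ((Complex.arg q : ℝ) : Real.Angle) = ((θ + s : ℝ) : Real.Angle) := by
    rw [hqe, Complex.arg_mul_coe_angle hz0 hw0, Real.Angle.coe_add]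
    congr 1
    rw [hzdef, Complex.arg_real_mul _ hR0, Complex.arg_exp_mul_I]
    exact Real.Angle.coe_toIocMod θ (-π)
  obtain ⟨k, hk⟩ := Real.Angle.angle_eq_iff_two_pi_dvd_sub.mp hang
  refine ⟨k, ?_⟩
  have : Complex.arg q - θ - 2*π*(k : ℤ) = s := by
    push_cast
    linarith [hk]
  rw [this]
  have hpi : π < 3.2 := by linarith [Real.pi_lt_d2]
  calc |s| ≤ π * (1/R) := hsb
  _ < 3.5/R := by
    rw [div_eq_mul_one_div 3.5 R]
    apply mul_lt_mul_of_pos_right (by linarith) (by positivity)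

lemma exists_point_angle (R : ℝ) (hR : 8 ≤ R) (a b : ℝ) (hab : a + 7/R < b)
    (hnear : ∀ θ : ℝ, ∃ p ∈ annulusPts R, ‖latC p - (R:ℂ) * Complex.exp ((θ:ℂ) * Complex.I)‖ ≤ 1) :
    ∃ p ∈ annulusPts R, ∃ k : ℤ, a < Complex.arg (latC p) - 2*π*k ∧ Complex.arg (latC p) - 2*π*k < b := by
  have hR0 : (0:ℝ) < R := by linarith
  obtain ⟨p, hp, hd⟩ := hnear ((a+b)/2)
  obtain ⟨k, hk⟩ := arg_approx R hR ((a+b)/2) p hp hd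
  have h1 := abs_lt.1 hk
  have h7 : 3.5/R + 3.5/R = 7/R := by ring
  exact ⟨p, hp, k, by linarith [h1.1], by linarith [h1.2]⟩

lemma periodic_mod {α : Type*} (K : ℕ) (f : ℕ → α) (h : ∀ j, f (j + K) = f j) (hK : 0 < K) :
    ∀ n, f n = f (n % K) := by
  intro n
  induction n using Nat.strong_induction_on with
  | _ n ih =>
    rcases lt_or_ge n K with h' | h'
    · rw [Nat.mod_eq_of_lt h']
    · have e : n = (n - K) + K := by omega
      calc f n = f ((n - K) + K) := by rw [← e]
      _ = f (n - K) := h _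
      _ = f ((n - K) % K) := ih _ (by omega)
      _ = f (n % K) := by rw [Nat.mod_eq_sub_mod h']

lemma exp_shift (x : ℝ) :
    Complex.exp (((x + 2*π : ℝ) : ℂ) * Complex.I) = Complex.exp ((x:ℂ) * Complex.I) := by
  push_cast
  rw [add_mul, Complex.exp_add, Complex.exp_two_pi_mul_I, mul_one]

lemma exp_diff_abs (α β : ℝ) :
    ‖Complex.exp ((β:ℂ) * Complex.I) - Complex.exp ((α:ℂ) * Complex.I)‖
      ≤ |β - α| := by
  have factor : Complex.exp ((β:ℂ) * Complex.I) - Complex.exp ((α:ℂ) * Complex.I)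
      = Complex.exp ((α:ℂ) * Complex.I) * (Complex.exp (((β - α : ℝ):ℂ) * Complex.I) - 1) := by
    rw [mul_sub, mul_one, ← Complex.exp_add]
    congr 2
    push_cast
    ring
  rw [factor, norm_mul, Complex.norm_exp_ofReal_mul_I, one_mul]
  exact exp_I_sub_one (β - α)

lemma dist_bound (R : ℝ) (hR : 8 ≤ R) (l m : ℤ × ℤ)
    (hl : l ∈ annulusPts R) (hm : m ∈ annulusPts R) (g : ℝ) (hg0 : 0 ≤ g) (hg : g ≤ 7/R)
    (hang : ‖Complex.exp ((Complex.arg (latC m) : ℂ) * Complex.I)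
      - Complex.exp ((Complex.arg (latC l) : ℂ) * Complex.I)‖ ≤ g) :
    ‖latC m - latC l‖ ≤ 10 := by
  have hR0 : (0:ℝ) < R := by linarith
  obtain ⟨hl1, hl2⟩ := abs_annulus hl
  obtain ⟨hm1, hm2⟩ := abs_annulus hm
  set Em : ℂ := Complex.exp ((Complex.arg (latC m) : ℂ) * Complex.I) with hEm
  set El : ℂ := Complex.exp ((Complex.arg (latC l) : ℂ) * Complex.I) with hEl
  have em : ((‖latC m‖ : ℝ) : ℂ) * Em = latC m := Complex.norm_mul_exp_arg_mul_I _
  have el : ((‖latC l‖ : ℝ) : ℂ) * El = latC l := Complex.norm_mul_exp_arg_mul_I _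
  have key : latC m - latC l
      = (((‖latC m‖ - ‖latC l‖ : ℝ)) : ℂ) * Em
        + ((‖latC l‖ : ℝ) : ℂ) * (Em - El) := by
    conv_lhs => rw [← em, ← el]
    push_cast
    ring
  rw [key]
  have t1 := norm_add_le
    ((((‖latC m‖ - ‖latC l‖ : ℝ)) : ℂ) * Em)
    (((‖latC l‖ : ℝ) : ℂ) * (Em - El))
  have e1 : ‖(((‖latC m‖ - ‖latC l‖ : ℝ)) : ℂ) * Em‖
      = |‖latC m‖ - ‖latC l‖| := by
    rw [norm_mul, Complex.norm_real, Real.norm_eq_abs, hEm, Complex.norm_exp_ofReal_mul_I, mul_one]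
  have e2 : ‖((‖latC l‖ : ℝ) : ℂ) * (Em - El)‖
      = ‖latC l‖ * ‖Em - El‖ := by
    rw [norm_mul, Complex.norm_real, Real.norm_eq_abs, abs_of_nonneg (norm_nonneg _)]
  rw [e1, e2] at t1
  have b1 : |‖latC m‖ - ‖latC l‖| ≤ 2 := by
    rw [abs_le]; constructor <;> linarith
  have b2 : ‖latC l‖ * ‖Em - El‖ ≤ (R + 1) * (7/R) := by
    apply mul_le_mul (by linarith) (hang.trans hg) (norm_nonneg _) (by linarith)
  have b3 : (R + 1) * (7/R) = 7 + 7/R := by field_simp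
  have b4 : 7/R ≤ 1 := by rw [div_le_one hR0]; linarith
  linarith [t1]

/-- Consecutive lattice points (in the cyclic ordering by nondecreasing polar angle)
in the annulus are at a bounded distance from one another, uniformly in `R`. -/
theorem consecutive_bounded :
    ∃ C : ℝ, 0 < C ∧ ∀ R : ℝ, 0 < R → ∀ K : ℕ, ∀ f : ℕ → ℤ × ℤ,
      (∀ j, f (j + K) = f j) →
      Set.BijOn f (Set.Ico 0 K) (annulusPts R) →
      (∀ i j : ℕ, i ≤ j → j < K → Complex.arg (latC (f i)) ≤ Complex.arg (latC (f j))) →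
      ∀ j : ℕ, ‖latC (f (j+1)) - latC (f j)‖ ≤ C := by
  
  refine ⟨100, by norm_num, ?_⟩
  intro R hR0 K f hper hbij hmono j
  obtain ⟨hs1, hs2⟩ := one_div_sqrt2
  obtain ⟨p0, hp0, _⟩ := exists_near R hR0 0
  obtain ⟨i0, hi0, _⟩ := hbij.surjOn hp0
  have hK : 0 < K := lt_of_le_of_lt (Nat.zero_le i0) hi0.2
  have hmod := periodic_mod K f hper hK
  obtain ⟨j', hj'⟩ : ∃ j', j' = j % K := ⟨_, rfl⟩
  have hj'K : j' < K := by rw [hj']; exact Nat.mod_lt _ hK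
  have hfj : f j = f j' := by rw [hj']; exact hmod j
  have hj'' : j' % K = j' := Nat.mod_eq_of_lt hj'K
  have hnext : (j + 1) % K = (j' + 1) % K := by
    rw [Nat.add_mod, Nat.add_mod j' 1, hj'', hj']
  have hfj1 : f (j + 1) = f ((j' + 1) % K) := by rw [← hnext]; exact hmod (j+1)
  have hmeml : f j' ∈ annulusPts R := hbij.mapsTo ⟨Nat.zero_le _, hj'K⟩
  rcases le_or_gt R 8 with hsmall | hbig
  · -- small R: trivial bound
    have hmemm : f ((j'+1) % K) ∈ annulusPts R := hbij.mapsTo ⟨Nat.zero_le _, Nat.mod_lt _ hK⟩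
    rw [hfj, hfj1]
    have tri : ‖latC (f ((j'+1) % K)) - latC (f j')‖
        ≤ ‖latC (f ((j'+1) % K))‖ + ‖latC (f j')‖ := by
      have h1 : ‖latC (f ((j'+1) % K)) - latC (f j')‖
          = ‖latC (f ((j'+1) % K)) - latC (f j')‖ := rfl
      have h2 := norm_sub_le (latC (f ((j'+1) % K))) (latC (f j'))
      rw [h1]
      exact h2.trans (by simp)
    have u1 := hmemm.2
    have u2 := hmeml.2
    linarith
  · have hR8 : (8:ℝ) ≤ R := le_of_lt hbig
    have hπ := Real.pi_pos
    rcases (by omega : j' + 1 < K ∨ j' + 1 = K) with hcase | hcase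
    · -- non-wrap
      have hmemm : f (j'+1) ∈ annulusPts R := hbij.mapsTo ⟨Nat.zero_le _, hcase⟩
      have hfj1' : f (j + 1) = f (j' + 1) := by rw [hfj1, Nat.mod_eq_of_lt hcase]
      set α := Complex.arg (latC (f j')) with hα
      set β := Complex.arg (latC (f (j'+1))) with hβ
      have hαβ : α ≤ β := hmono j' (j'+1) (Nat.le_succ _) hcase
      have hgap : β ≤ α + 7/R := by
        by_contra hcon
        push_neg at hcon
        obtain ⟨p, hp, k, hk1, hk2⟩ := exists_point_angle R hR8 α β hcon
          (fun θ => exists_near R hR0 θ)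
        have hp1 := Complex.neg_pi_lt_arg (latC p)
        have hp2 := Complex.arg_le_pi (latC p)
        have ha1 := Complex.neg_pi_lt_arg (latC (f j'))
        have hb2 := Complex.arg_le_pi (latC (f (j'+1)))
        have hk0 : k = 0 := by
          have hcast : (-1:ℝ) < (k:ℝ) ∧ ((k:ℝ)) < 1 := by
            constructor <;> nlinarith
          have : (-1:ℤ) < k ∧ k < 1 := ⟨by exact_mod_cast hcast.1, by exact_mod_cast hcast.2⟩
          omega
        rw [hk0] at hk1 hk2
        push_cast at hk1 hk2
        obtain ⟨i, hi, hfi⟩ := hbij.surjOn hp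
        rcases le_or_gt i j' with hle | hlt
        · have := hmono i j' hle hj'K
          rw [hfi] at this
          simp only [mul_zero, sub_zero] at hk1
          linarith
        · have := hmono (j'+1) i hlt hi.2
          rw [hfi] at this
          simp only [mul_zero, sub_zero] at hk2
          linarith
      -- distance
      rw [hfj, hfj1']
      have hang : ‖Complex.exp ((β:ℂ) * Complex.I) - Complex.exp ((α:ℂ) * Complex.I)‖
          ≤ β - α := by
        have := exp_diff_abs α β
        rwa [abs_of_nonneg (by linarith)] at this
      have hd := dist_bound R hR8 (f j') (f (j'+1)) hmeml hmemm (β - α) (by linarith)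
        (by linarith) hang
      linarith
    · -- wrap case
      have hmem0 : f 0 ∈ annulusPts R := hbij.mapsTo ⟨Nat.zero_le _, hK⟩
      have hfj1' : f (j + 1) = f 0 := by rw [hfj1, hcase, Nat.mod_self]
      set α := Complex.arg (latC (f 0)) with hα
      set β := Complex.arg (latC (f j')) with hβ
      have hbounds : ∀ i, i < K → α ≤ Complex.arg (latC (f i)) ∧ Complex.arg (latC (f i)) ≤ β := by
        intro i hiK
        exact ⟨hmono 0 i (Nat.zero_le _) hiK, hmono i j' (by omega) hj'K⟩
      have hgap : α + 2*π ≤ β + 7/R := by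
        by_contra hcon
        push_neg at hcon
        have hcon' : β + 7/R < α + 2*π := hcon
        obtain ⟨p, hp, k, hk1, hk2⟩ := exists_point_angle R hR8 β (α + 2*π) hcon'
          (fun θ => exists_near R hR0 θ)
        obtain ⟨i, hi, hfi⟩ := hbij.surjOn hp
        obtain ⟨hpl, hpu⟩ := hbounds i hi.2
        rw [hfi] at hpl hpu
        have hkneg : (k:ℝ) < 0 := by nlinarith
        have hkneg' : k ≤ -1 := by
          have : k < 0 := by exact_mod_cast hkneg
          omega
        have hkle : (k:ℝ) ≤ -1 := by exact_mod_cast hkneg'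
        have : 2*π*(k:ℝ) ≤ 2*π*(-1) := by nlinarith
        linarith
      rw [hfj, hfj1']
      have ha1 := Complex.neg_pi_lt_arg (latC (f 0))
      have hb2 := Complex.arg_le_pi (latC (f j'))
      have hg0 : 0 ≤ α + 2*π - β := by linarith
      have hang : ‖Complex.exp ((α:ℂ) * Complex.I) - Complex.exp ((β:ℂ) * Complex.I)‖
          ≤ α + 2*π - β := by
        have factor : Complex.exp ((α:ℂ) * Complex.I) - Complex.exp ((β:ℂ) * Complex.I)
            = Complex.exp ((β:ℂ) * Complex.I)
              * (Complex.exp (((α - β + 2*π : ℝ):ℂ) * Complex.I) - 1) := by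
          rw [mul_sub, mul_one, exp_shift (α - β), ← Complex.exp_add]
          have e2 : (β:ℂ) * Complex.I + ((α - β : ℝ):ℂ) * Complex.I = (α:ℂ) * Complex.I := by
            push_cast; ring
          rw [e2]
        rw [factor, norm_mul, Complex.norm_exp_ofReal_mul_I, one_mul]
        have h3 := exp_I_sub_one (α - β + 2*π)
        rw [abs_of_nonneg (by linarith)] at h3
        linarith
      have hd := dist_bound R hR8 (f j') (f 0) hmeml hmem0 (α + 2*π - β) hg0
        (by linarith) hang
      linarith
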